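/- Let G be a cubic graph, C a dominating cycle in G, and M = G \ E(C) the associated perfect pseudo-matching. Suppose the contracted graph G/M admits a cycle decomposition S compatible with the transition system T corresponding to C. Then G has a cycle double cover containing C; namely, lifting the cycles of S back to G yields a set S_3 of cycles in G covering every edge of M twice and every edge of C once, so S_3 ∪ {C} is a cycle double cover of G. -/

import Mathlib

open SimpleGraph Classical

/-- The claw `K_{1,3}`: vertex `0` is the center, adjacent to `1,2,3`. -/
def clawGraph : SimpleGraph (Fin 4) :=
  SimpleGraph.fromEdgeSet {s((0:Fin 4),1), s((0:Fin 4),2), s((0:Fin 4),3)}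

/-- A graph is cubic if every vertex has exactly 3 neighbours. -/
def IsCubic {V : Type*} (G : SimpleGraph V) : Prop :=
  ∀ v : V, (G.neighborSet v).ncard = 3

/-- `M` is a perfect pseudo-matching of `G`: a spanning subgraph each of whose
connected components is isomorphic to `K₂` or to the claw `K_{1,3}`. -/
def IsPerfectPseudoMatching {V : Type*} (G M : SimpleGraph V) : Prop :=
  M ≤ G ∧ ∀ c : M.ConnectedComponent,
    Nonempty ((M.induce c.supp) ≃g (⊤ : SimpleGraph (Fin 2))) ∨
    Nonempty ((M.induce c.supp) ≃g clawGraph)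

/-- `C` is a cycle, given as a subgraph of `G`: nonempty edge set, every vertex of
degree `0` or `2`, and connected on its support. -/
def IsCycleSubgraph {V : Type*} (G C : SimpleGraph V) : Prop :=
  C ≤ G ∧ C.edgeSet.Nonempty ∧
  (∀ v : V, (C.neighborSet v).ncard = 0 ∨ (C.neighborSet v).ncard = 2) ∧
  (∀ u v : V, u ∈ C.support → v ∈ C.support → C.Reachable u v)

/-- A dominating cycle: every edge of `G` has an endpoint on `C`. -/
def IsDominatingCycle {V : Type*} (G C : SimpleGraph V) : Prop :=
  IsCycleSubgraph G C ∧ ∀ u v : V, G.Adj u v → u ∈ C.support ∨ v ∈ C.support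

/-- `C` is a connected component of `D` which is a cycle. -/
def IsComponentCycleOf {V : Type*} (D C : SimpleGraph V) : Prop :=
  IsCycleSubgraph D C ∧ ∀ u v : V, u ∈ C.support → D.Adj u v → C.Adj u v

/-- A proper 3-edge-colouring of `G`. -/
def IsProper3EdgeColoring {V : Type*} (G : SimpleGraph V) (c : Sym2 V → Fin 3) : Prop :=
  ∀ e ∈ G.edgeSet, ∀ f ∈ G.edgeSet, e ≠ f → (∃ v : V, v ∈ e ∧ v ∈ f) → c e ≠ c f

def Proper3EdgeColorable {V : Type*} (G : SimpleGraph V) : Prop :=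
  ∃ c : Sym2 V → Fin 3, IsProper3EdgeColoring G c

/-- A cycle double cover of `G` containing, among its members, specified cycles. -/
def IsCycleDoubleCover {V : Type*} (G : SimpleGraph V) {n : ℕ}
    (F : Fin n → SimpleGraph V) : Prop :=
  (∀ i, IsCycleSubgraph G (F i)) ∧
  ∀ e ∈ G.edgeSet, {i : Fin n | e ∈ (F i).edgeSet}.ncard = 2

/-- A cycle in the contracted multigraph `G/M`: a cyclic sequence of pairwise distinct
edges of `G \ E(M)` joining pairwise distinct components of `M`. -/
structure ContractedCycle {V : Type*} (G M : SimpleGraph V) where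
  n : ℕ
  hn : 0 < n
  edge : Fin n → Sym2 V
  vtx : Fin n → M.ConnectedComponent
  mem : ∀ i, edge i ∈ G.edgeSet \ M.edgeSet
  edge_inj : Function.Injective edge
  vtx_inj : Function.Injective vtx
  ends : ∀ i : Fin n, ∃ x y : V, edge i = s(x, y) ∧
    M.connectedComponentMk x = vtx i ∧
    M.connectedComponentMk y = vtx (i + ⟨1 % n, Nat.mod_lt _ hn⟩)

/-- The edge set of a contracted cycle. -/
def ContractedCycle.edges {V : Type*} {G M : SimpleGraph V} (c : ContractedCycle G M) :
    Set (Sym2 V) := Set.range c.edge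

/-- A decomposition of the contracted multigraph `G/M` into cycles, compatible with the
transition system `T_M` induced by the cycles of `G \ E(M)` (i.e. no cycle of the
decomposition contains two distinct edges sharing a vertex of `G`). -/
def IsCompatibleCycleDecomposition {V : Type*} (G M : SimpleGraph V)
    (D : Set (ContractedCycle G M)) : Prop :=
  (∀ e ∈ G.edgeSet \ M.edgeSet, ∃ c ∈ D, e ∈ c.edges) ∧
  (∀ c ∈ D, ∀ c' ∈ D, c ≠ c' → Disjoint c.edges c'.edges) ∧
  (∀ c ∈ D, ∀ e ∈ c.edges, ∀ f ∈ c.edges, e ≠ f → ¬ ∃ v : V, v ∈ e ∧ v ∈ f)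

/-- The intersection graph of a family of cycles of `G/M`: two distinct cycles are
adjacent iff they meet in a vertex of `G/M`. -/
def intersectionGraph {V : Type*} (G M : SimpleGraph V) (D : Set (ContractedCycle G M)) :
    SimpleGraph D where
  Adj a b := a ≠ b ∧ ∃ w : M.ConnectedComponent,
    w ∈ Set.range a.1.vtx ∧ w ∈ Set.range b.1.vtx
  symm := ⟨by
    rintro a b ⟨hne, w, h1, h2⟩
    exact ⟨hne.symm, w, h2, h1⟩⟩
  loopless := ⟨by
    rintro a ⟨hne, -⟩
    exact hne rfl⟩

/-- `H` is a minor of `G` (branch-set definition). -/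
def IsMinorOf {α β : Type*} (H : SimpleGraph α) (G : SimpleGraph β) : Prop :=
  ∃ f : α → Set β, (∀ a, (f a).Nonempty) ∧ (∀ a, (G.induce (f a)).Connected) ∧
    (Pairwise (Function.onFun Disjoint f)) ∧
    ∀ a b, H.Adj a b → ∃ x ∈ f a, ∃ y ∈ f b, G.Adj x y

/-- Planarity, via Wagner's theorem: no `K₅` and no `K_{3,3}` minor. -/
def IsPlanar {β : Type*} (G : SimpleGraph β) : Prop :=
  ¬ IsMinorOf (⊤ : SimpleGraph (Fin 5)) G ∧
  ¬ IsMinorOf (completeBipartiteGraph (Fin 3) (Fin 3)) G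

/-- The simple graph underlying the contraction `G/M`. -/
def contractedSimple {V : Type*} (G M : SimpleGraph V) : SimpleGraph M.ConnectedComponent where
  Adj c d := c ≠ d ∧ ∃ x y : V, G.Adj x y ∧ ¬ M.Adj x y ∧
    M.connectedComponentMk x = c ∧ M.connectedComponentMk y = d
  symm := ⟨by
    rintro c d ⟨hne, x, y, h1, h2, h3, h4⟩
    exact ⟨hne.symm, y, x, h1.symm, fun h => h2 h.symm, h4, h3⟩⟩
  loopless := ⟨by
    rintro c ⟨hne, -⟩
    exact hne rfl⟩

/-- Number of endpoints (with multiplicity) of the edge `e` lying in the part `c`. -/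
noncomputable def endCount {V α : Type*} (e : Sym2 V) (g : V → α) (c : α) : ℕ :=
  Sym2.lift ⟨fun x y => (if g x = c then 1 else 0) + (if g y = c then 1 else 0),
    fun x y => by dsimp; omega⟩ e

/-- The degree of a component `c` of `M` in the contracted multigraph `G/M`. -/
noncomputable def contractedDegree {V : Type*} (G M : SimpleGraph V)
    (c : M.ConnectedComponent) : ℕ :=
  ∑ᶠ e ∈ (G.edgeSet \ M.edgeSet), endCount e (M.connectedComponentMk) c

/-!
Every vertex of the dominating cycle `C` is a leaf of `M = G \ C`; the other vertices are
centres of claws of `M` whose three leaves lie on `C`. A cycle `c` of `G/M` compatible with the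
transition system enters and leaves each component of `M` it visits through two distinct
vertices; joining them inside the component (directly in a `K₂`, through the centre in a claw)
lifts `c` to a cycle of `G` made of the edges of `c` and the edges of `M` at the vertices `c`
uses. An edge of `C` lies in the lift of the unique member of the decomposition containing it,
an edge of `M` at a leaf `x` in the lifts of the two distinct members through the two edges of
`C` at `x`. Adding `C` itself gives the cycle double cover.
-/

namespace SimpleGraph

variable {V : Type*} {G M : SimpleGraph V}

def IsLeaf (M : SimpleGraph V) (x : V) : Prop :=
  (M.neighborSet x).ncard = 1

lemma IsLeaf.eq_of_adj {x a b : V} (hx : M.IsLeaf x) (ha : M.Adj x a) (hb : M.Adj x b) :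
    a = b := by
  obtain ⟨z, hz⟩ := Set.ncard_eq_one.mp hx
  have ha' : a ∈ M.neighborSet x := ha
  have hb' : b ∈ M.neighborSet x := hb
  rw [hz, Set.mem_singleton_iff] at ha' hb'
  exact ha'.trans hb'.symm

lemma IsLeaf.exists_adj {x : V} (hx : M.IsLeaf x) : ∃ m, M.Adj x m := by
  obtain ⟨m, hm⟩ := Set.ncard_eq_one.mp hx
  exact ⟨m, show m ∈ M.neighborSet x by simp [hm]⟩

lemma eq_or_eq_of_reachable_of_isLeaf {x y u : V} (hxy : M.Adj x y) (hx : M.IsLeaf x)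
    (hy : M.IsLeaf y) (h : M.Reachable x u) : u = x ∨ u = y := by
  suffices ∀ a, (a = x ∨ a = y) → M.Walk a u → u = x ∨ u = y from
    this x (Or.inl rfl) h.some
  intro a ha q
  clear h
  induction q with
  | nil => exact ha
  | cons haw _ ih =>
    apply ih
    rcases ha with rfl | rfl
    · exact Or.inr (hx.eq_of_adj haw hxy)
    · exact Or.inl (hy.eq_of_adj haw hxy.symm)

section LeafEdges

variable (hM : ∀ ⦃x y⦄, M.Adj x y → M.IsLeaf x ∨ M.IsLeaf y)
include hM

lemma adj_or_exists_adj_adj_of_reachable {u v : V} (h : M.Reachable u v) (huv : u ≠ v) :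
    M.Adj u v ∨ ∃ z, M.Adj u z ∧ M.Adj z v := by
  obtain ⟨p⟩ := h
  induction p with
  | nil => exact absurd rfl huv
  | @cons u x v hux p ih =>
    by_cases hxv : x = v
    · exact Or.inl (hxv ▸ hux)
    rcases ih hxv with hxv' | ⟨z, hxz, hzv⟩
    · exact Or.inr ⟨x, hux, hxv'⟩
    by_cases huz : u = z
    · exact Or.inl (huz ▸ hzv)
    -- `x` has the two neighbours `u ≠ z`, so it is no leaf and `z` is one
    have hz : M.IsLeaf z := (hM hxz).resolve_left fun hx => huz (hx.eq_of_adj hux.symm hxz)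
    exact Or.inl (hz.eq_of_adj hxz.symm hzv ▸ hux)

lemma adj_of_reachable_of_not_isLeaf {u v : V} (hu : ¬ M.IsLeaf u) (h : M.Reachable u v)
    (huv : u ≠ v) : M.Adj u v := by
  refine (adj_or_exists_adj_adj_of_reachable hM h huv).resolve_right ?_
  rintro ⟨z, huz, hzv⟩
  exact (hM huz).elim hu fun hz => huv (hz.eq_of_adj huz.symm hzv)

end LeafEdges

lemma mem_support_of_mem_edgeSet {e : Sym2 V} (he : e ∈ G.edgeSet) {v : V} (hv : v ∈ e) :
    v ∈ G.support :=
  G.mem_support.mpr ⟨Sym2.Mem.other hv, by rwa [← mem_edgeSet, Sym2.other_spec hv]⟩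

lemma IsCubic.finite_neighborSet (hG : IsCubic G) (v : V) : (G.neighborSet v).Finite :=
  Set.finite_of_ncard_pos (by rw [hG v]; norm_num)

lemma IsCubic.ncard_neighborSet_sdiff (hG : IsCubic G) (hMG : M ≤ G) (v : V) :
    ((G \ M).neighborSet v).ncard = 3 - (M.neighborSet v).ncard := by
  rw [neighborSet_sdiff, Set.ncard_sdiff (neighborSet_mono hMG v)
    ((hG.finite_neighborSet v).subset (neighborSet_mono hMG v)), hG v]

lemma IsCycleSubgraph.ncard_neighborSet_of_mem_support {C : SimpleGraph V}
    (hG : IsCubic G) (hC : IsCycleSubgraph G C) {v : V} (hv : v ∈ C.support) :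
    (C.neighborSet v).ncard = 2 := by
  refine (hC.2.2.1 v).resolve_left fun h0 => ?_
  obtain ⟨w, hw⟩ := hv
  exact Set.ncard_ne_zero_of_mem (s := C.neighborSet v) hw
    ((hG.finite_neighborSet v).subset (neighborSet_mono hC.1 v)) h0

lemma IsCycleSubgraph.isLeaf_sdiff {C : SimpleGraph V} (hG : IsCubic G)
    (hC : IsCycleSubgraph G C) {v : V} (hv : v ∈ C.support) : (G \ C).IsLeaf v := by
  rw [IsLeaf, hG.ncard_neighborSet_sdiff hC.1, hC.ncard_neighborSet_of_mem_support hG hv]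

lemma edgeSet_sdiff_sdiff_of_le {C : SimpleGraph V} (h : C ≤ G) :
    G.edgeSet \ (G \ C).edgeSet = C.edgeSet := by
  rw [edgeSet_sdiff, Set.sdiff_sdiff_right_self, Set.inter_eq_right.mpr (edgeSet_mono h)]

lemma IsCycleSubgraph.isLeaf_sdiff_of_mem {C : SimpleGraph V} (hG : IsCubic G)
    (hC : IsCycleSubgraph G C) :
    ∀ e ∈ G.edgeSet \ (G \ C).edgeSet, ∀ v ∈ e, (G \ C).IsLeaf v := by
  rw [edgeSet_sdiff_sdiff_of_le hC.1]
  exact fun e he v hv => hC.isLeaf_sdiff hG (mem_support_of_mem_edgeSet he hv)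

lemma IsDominatingCycle.isLeaf_or_isLeaf_of_adj_sdiff {C : SimpleGraph V} (hG : IsCubic G)
    (hC : IsDominatingCycle G C) ⦃x y : V⦄ (h : (G \ C).Adj x y) :
    (G \ C).IsLeaf x ∨ (G \ C).IsLeaf y :=
  (hC.2 x y h.1).imp (hC.1.isLeaf_sdiff hG) (hC.1.isLeaf_sdiff hG)

end SimpleGraph

namespace ContractedCycle

variable {V : Type*} {G M : SimpleGraph V} (c : ContractedCycle G M)

def next (i : Fin c.n) : Fin c.n :=
  i + ⟨1 % c.n, Nat.mod_lt _ c.hn⟩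

def prev (i : Fin c.n) : Fin c.n :=
  i - ⟨1 % c.n, Nat.mod_lt _ c.hn⟩

lemma next_prev (i : Fin c.n) : c.next (c.prev i) = i := by
  have : NeZero c.n := ⟨c.hn.ne'⟩
  exact sub_add_cancel i _

lemma next_injective : Function.Injective c.next := by
  have : NeZero c.n := ⟨c.hn.ne'⟩
  exact add_left_injective _

lemma next_mk {k : ℕ} (hk : k + 1 < c.n) : c.next ⟨k, by omega⟩ = ⟨k + 1, hk⟩ := by
  ext
  simp only [next, Fin.val_add]
  rw [Nat.mod_eq_of_lt (by omega : 1 < c.n), Nat.mod_eq_of_lt hk]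

noncomputable def tail (i : Fin c.n) : V :=
  (c.ends i).choose

noncomputable def head (i : Fin c.n) : V :=
  (c.ends i).choose_spec.choose

lemma edge_eq (i : Fin c.n) : c.edge i = s(c.tail i, c.head i) :=
  (c.ends i).choose_spec.choose_spec.1

lemma mk_tail (i : Fin c.n) : M.connectedComponentMk (c.tail i) = c.vtx i :=
  (c.ends i).choose_spec.choose_spec.2.1

lemma mk_head (i : Fin c.n) : M.connectedComponentMk (c.head i) = c.vtx (c.next i) :=
  (c.ends i).choose_spec.choose_spec.2.2

lemma edge_mem_edges (i : Fin c.n) : c.edge i ∈ c.edges :=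
  Set.mem_range_self i

lemma edges_subset : c.edges ⊆ G.edgeSet \ M.edgeSet :=
  Set.range_subset_iff.mpr c.mem

lemma tail_ne_head (i : Fin c.n) : c.tail i ≠ c.head i := by
  have h := (c.mem i).1
  rw [c.edge_eq] at h
  exact G.ne_of_adj h

def Uses (v : V) : Prop :=
  ∃ e ∈ c.edges, v ∈ e

def IsCompatible : Prop :=
  ∀ e ∈ c.edges, ∀ f ∈ c.edges, e ≠ f → ¬ ∃ v : V, v ∈ e ∧ v ∈ f

/-- In a claw entered and left through two leaves this adds the two spokes to them; in a `K₂`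
it adds the edge itself. -/
def lift : SimpleGraph V where
  Adj x y := s(x, y) ∈ c.edges ∨ (M.Adj x y ∧ (c.Uses x ∨ c.Uses y))
  symm := ⟨fun x y h =>
    h.imp (fun h => by rwa [Sym2.eq_swap] at h) fun h => ⟨h.1.symm, h.2.symm⟩⟩
  loopless := ⟨fun x h => h.elim (fun h => G.irrefl (c.edges_subset h).1) fun h => M.irrefl h.1⟩

variable {c}

lemma uses_iff {v : V} : c.Uses v ↔ ∃ i, v = c.tail i ∨ v = c.head i := by
  simp only [Uses, edges, Set.exists_range_iff, edge_eq, Sym2.mem_iff]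

lemma uses_tail (i : Fin c.n) : c.Uses (c.tail i) :=
  uses_iff.mpr ⟨i, Or.inl rfl⟩

lemma uses_head (i : Fin c.n) : c.Uses (c.head i) :=
  uses_iff.mpr ⟨i, Or.inr rfl⟩

lemma mk_mem_range_vtx_of_uses {v : V} (hv : c.Uses v) :
    M.connectedComponentMk v ∈ Set.range c.vtx := by
  obtain ⟨i, rfl | rfl⟩ := uses_iff.mp hv
  · exact ⟨i, (c.mk_tail i).symm⟩
  · exact ⟨c.next i, (c.mk_head i).symm⟩

lemma isLeaf_of_uses (hleaf : ∀ e ∈ G.edgeSet \ M.edgeSet, ∀ v ∈ e, M.IsLeaf v) {v : V}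
    (hv : c.Uses v) : M.IsLeaf v := by
  obtain ⟨e, he, hve⟩ := hv
  exact hleaf e (c.edges_subset he) v hve

lemma IsCompatible.eq_of_mem (hc : c.IsCompatible) {e f : Sym2 V} {v : V} (he : e ∈ c.edges)
    (hf : f ∈ c.edges) (hve : v ∈ e) (hvf : v ∈ f) : e = f := by
  by_contra hef
  exact hc e he f hf hef ⟨v, hve, hvf⟩

lemma IsCompatible.head_prev_ne_tail (hc : c.IsCompatible) (j : Fin c.n) :
    c.head (c.prev j) ≠ c.tail j := by
  intro h
  have hedge : c.edge (c.prev j) = c.edge j :=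
    hc.eq_of_mem (c.edge_mem_edges _) (c.edge_mem_edges j)
      (by rw [edge_eq]; exact Sym2.mem_mk_right _ _)
      (by rw [edge_eq, ← h]; exact Sym2.mem_mk_left _ _)
  rw [c.edge_inj hedge] at h
  exact c.tail_ne_head j h.symm

lemma setOf_uses_mk_eq (j : Fin c.n) :
    {v | c.Uses v ∧ M.connectedComponentMk v = c.vtx j} = {c.head (c.prev j), c.tail j} := by
  ext v
  simp only [Set.mem_ofPred_eq, Set.mem_insert_iff, Set.mem_singleton_iff]
  constructor
  · rintro ⟨hv, hvj⟩
    obtain ⟨i, rfl | rfl⟩ := uses_iff.mp hv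
    · rw [mk_tail] at hvj
      rw [c.vtx_inj hvj]
      exact Or.inr rfl
    · rw [mk_head, ← c.next_prev j] at hvj
      rw [c.next_injective (c.vtx_inj hvj)]
      exact Or.inl rfl
  · rintro (rfl | rfl)
    · exact ⟨uses_head _, by rw [mk_head, next_prev]⟩
    · exact ⟨uses_tail j, c.mk_tail j⟩

lemma IsCompatible.ncard_setOf_uses_mk (hc : c.IsCompatible) (j : Fin c.n) :
    {v | c.Uses v ∧ M.connectedComponentMk v = c.vtx j}.ncard = 2 := by
  rw [setOf_uses_mk_eq, Set.ncard_pair (hc.head_prev_ne_tail j)]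

lemma lift_adj {x y : V} :
    c.lift.Adj x y ↔ s(x, y) ∈ c.edges ∨ (M.Adj x y ∧ (c.Uses x ∨ c.Uses y)) :=
  Iff.rfl

lemma lift_adj_tail_head (i : Fin c.n) : c.lift.Adj (c.tail i) (c.head i) :=
  Or.inl (c.edge_eq i ▸ c.edge_mem_edges i)

lemma lift_le (hMG : M ≤ G) : c.lift ≤ G := by
  rintro x y (h | ⟨h, -⟩)
  · exact (c.edges_subset h).1
  · exact hMG h

lemma mem_edgeSet_lift_of_notMem {e : Sym2 V} (he : e ∉ M.edgeSet) :
    e ∈ c.lift.edgeSet ↔ e ∈ c.edges := by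
  induction e using Sym2.ind with
  | _ x y => exact ⟨fun h => h.resolve_right fun h' => he h'.1, Or.inl⟩

lemma neighborSet_lift_of_not_uses {v : V} (hv : ¬ c.Uses v) :
    c.lift.neighborSet v = {w | M.Adj v w ∧ c.Uses w} := by
  ext w
  refine ⟨?_, fun h => Or.inr ⟨h.1, Or.inr h.2⟩⟩
  rintro (h | ⟨h, h' | h'⟩)
  · exact absurd ⟨_, h, Sym2.mem_mk_left v w⟩ hv
  · exact absurd h' hv
  · exact ⟨h, h'⟩

section Compatible

variable (hleaf : ∀ e ∈ G.edgeSet \ M.edgeSet, ∀ v ∈ e, M.IsLeaf v) (hc : c.IsCompatible)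
include hleaf hc

lemma uses_of_adj_of_uses {x y : V} (hxy : M.Adj x y) (hx : M.IsLeaf x) (hy : c.Uses y) :
    c.Uses x := by
  -- the component of `y` is `{x, y}`, and `c` uses two of its vertices
  obtain ⟨j, hj⟩ := mk_mem_range_vtx_of_uses hy
  have hsub : {v | c.Uses v ∧ M.connectedComponentMk v = c.vtx j} ⊆ {y, x} := fun v hv =>
    eq_or_eq_of_reachable_of_isLeaf hxy.symm (isLeaf_of_uses hleaf hy) hx
      (ConnectedComponent.exact (hj.symm.trans hv.2.symm))
  have hpair : ({y, x} : Set V).ncard ≤ 2 :=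
    (Set.ncard_insert_le y {x}).trans (by rw [Set.ncard_singleton])
  have heq := Set.eq_of_subset_of_ncard_le hsub (hpair.trans (hc.ncard_setOf_uses_mk j).ge)
  have hx' : x ∈ ({y, x} : Set V) := Set.mem_insert_of_mem y rfl
  rw [← heq] at hx'
  exact hx'.1

lemma mem_edgeSet_lift_iff_uses {x y : V} (hxy : M.Adj x y) (hx : M.IsLeaf x) :
    s(x, y) ∈ c.lift.edgeSet ↔ c.Uses x := by
  refine ⟨?_, fun h => Or.inr ⟨hxy, Or.inl h⟩⟩
  rintro (h | ⟨-, hx' | hy⟩)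
  · exact absurd hxy (c.edges_subset h).2
  · exact hx'
  · exact uses_of_adj_of_uses hleaf hc hxy hx hy

lemma ncard_neighborSet_lift_of_uses {v : V} (hv : c.Uses v) :
    (c.lift.neighborSet v).ncard = 2 := by
  obtain ⟨e, he, hve⟩ := hv
  obtain ⟨m, hvm⟩ := (isLeaf_of_uses hleaf ⟨e, he, hve⟩).exists_adj
  have heo : s(v, Sym2.Mem.other hve) = e := Sym2.other_spec hve
  have hvo : ¬ M.Adj v (Sym2.Mem.other hve) := (c.edges_subset (heo ▸ he)).2
  have hset : c.lift.neighborSet v = {Sym2.Mem.other hve, m} := by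
    ext w
    simp only [mem_neighborSet, lift_adj, Set.mem_insert_iff, Set.mem_singleton_iff]
    constructor
    · rintro (hw | ⟨hw, -⟩)
      · exact Or.inl (Sym2.congr_right.mp
          ((hc.eq_of_mem hw he (Sym2.mem_mk_left v w) hve).trans heo.symm))
      · exact Or.inr ((isLeaf_of_uses hleaf ⟨e, he, hve⟩).eq_of_adj hw hvm)
    · rintro (rfl | rfl)
      · exact Or.inl (by rwa [heo])
      · exact Or.inr ⟨hvm, Or.inl ⟨e, he, hve⟩⟩
  rw [hset, Set.ncard_pair fun h => hvo (by rwa [h])]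

end Compatible

section LeafEdges

variable (hM : ∀ ⦃x y⦄, M.Adj x y → M.IsLeaf x ∨ M.IsLeaf y)
include hM

lemma lift_reachable_of_mk_eq {u v : V} (hu : c.Uses u) (hv : c.Uses v)
    (h : M.connectedComponentMk u = M.connectedComponentMk v) : c.lift.Reachable u v := by
  by_cases huv : u = v
  · exact huv ▸ Reachable.refl u
  rcases adj_or_exists_adj_adj_of_reachable hM (ConnectedComponent.exact h) huv with
    huv | ⟨z, huz, hzv⟩
  · exact (lift_adj.mpr (Or.inr ⟨huv, Or.inl hu⟩)).reachable
  · exact (lift_adj.mpr (Or.inr ⟨huz, Or.inl hu⟩)).reachable.trans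
      (lift_adj.mpr (Or.inr ⟨hzv, Or.inr hv⟩)).reachable

lemma lift_reachable_tail (i : Fin c.n) : c.lift.Reachable (c.tail ⟨0, c.hn⟩) (c.tail i) := by
  obtain ⟨k, hk⟩ := i
  induction k with
  | zero => rfl
  | succ k ih =>
    refine (ih (by omega)).trans ((lift_adj_tail_head _).reachable.trans ?_)
    rw [← c.next_mk hk]
    exact lift_reachable_of_mk_eq hM (uses_head _) (uses_tail _) (by rw [mk_head, mk_tail])

lemma lift_reachable_of_uses {v : V} (hv : c.Uses v) :
    c.lift.Reachable (c.tail ⟨0, c.hn⟩) v := by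
  obtain ⟨i, rfl | rfl⟩ := uses_iff.mp hv
  · exact lift_reachable_tail hM i
  · exact (lift_reachable_tail hM i).trans (lift_adj_tail_head i).reachable

variable (hleaf : ∀ e ∈ G.edgeSet \ M.edgeSet, ∀ v ∈ e, M.IsLeaf v) (hc : c.IsCompatible)
include hleaf hc

lemma ncard_neighborSet_lift (v : V) :
    (c.lift.neighborSet v).ncard = 0 ∨ (c.lift.neighborSet v).ncard = 2 := by
  by_cases hv : c.Uses v
  · exact Or.inr (ncard_neighborSet_lift_of_uses hleaf hc hv)
  rw [neighborSet_lift_of_not_uses hv]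
  by_cases h : ∃ w, M.Adj v w ∧ c.Uses w
  · obtain ⟨w, hvw, hw⟩ := h
    have hvl : ¬ M.IsLeaf v := fun hl => hv (uses_of_adj_of_uses hleaf hc hvw hl hw)
    obtain ⟨j, hj⟩ := mk_mem_range_vtx_of_uses hw
    have hvj : M.connectedComponentMk v = c.vtx j :=
      (ConnectedComponent.connectedComponentMk_eq_of_adj hvw).trans hj.symm
    -- `v` is not a leaf, so it is adjacent to every other vertex of its component
    have hset :
        {w | M.Adj v w ∧ c.Uses w} = {w | c.Uses w ∧ M.connectedComponentMk w = c.vtx j} := by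
      ext u
      refine ⟨fun ⟨hvu, hu⟩ => ⟨hu, ?_⟩, fun ⟨hu, huj⟩ => ⟨?_, hu⟩⟩
      · rw [← ConnectedComponent.connectedComponentMk_eq_of_adj hvu, hvj]
      · exact adj_of_reachable_of_not_isLeaf hM hvl
          (ConnectedComponent.exact (hvj.trans huj.symm)) fun h => hv (h ▸ hu)
    exact Or.inr (hset ▸ hc.ncard_setOf_uses_mk j)
  · have hempty : {w | M.Adj v w ∧ c.Uses w} = ∅ :=
      Set.eq_empty_of_forall_notMem fun w hw => h ⟨w, hw⟩
    exact Or.inl (by rw [hempty, Set.ncard_empty])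

theorem isCycleSubgraph_lift (hMG : M ≤ G) : IsCycleSubgraph G c.lift := by
  refine ⟨lift_le hMG, ⟨s(c.tail ⟨0, c.hn⟩, c.head ⟨0, c.hn⟩), lift_adj_tail_head _⟩,
    ncard_neighborSet_lift hM hleaf hc, ?_⟩
  have hbase : ∀ v ∈ c.lift.support, c.lift.Reachable (c.tail ⟨0, c.hn⟩) v := by
    rintro v ⟨w, hw | ⟨hvw, hv | hw⟩⟩
    · exact lift_reachable_of_uses hM ⟨_, hw, Sym2.mem_mk_left v w⟩
    · exact lift_reachable_of_uses hM hv
    · exact (lift_reachable_of_uses hM hw).trans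
        (lift_adj.mpr (Or.inr ⟨hvw.symm, Or.inl hw⟩)).reachable
  exact fun u v hu hv => (hbase u hu).symm.trans (hbase v hv)

end LeafEdges

end ContractedCycle

namespace IsCompatibleCycleDecomposition

variable {V : Type*} {G M : SimpleGraph V} {D : Set (ContractedCycle G M)}

lemma eq_of_mem_edges (hD : IsCompatibleCycleDecomposition G M D) {c c' : ContractedCycle G M}
    (hc : c ∈ D) (hc' : c' ∈ D) {e : Sym2 V} (he : e ∈ c.edges) (he' : e ∈ c'.edges) :
    c = c' := by
  by_contra hne
  exact Set.disjoint_left.mp (hD.2.1 c hc c' hc' hne) he he'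

lemma finite [Finite V] (hD : IsCompatibleCycleDecomposition G M D) : D.Finite :=
  Set.Finite.of_finite_image (f := fun c => c.edge ⟨0, c.hn⟩) (Set.toFinite _)
    fun c hc c' hc' (h : c.edge _ = c'.edge _) =>
      hD.eq_of_mem_edges hc hc' (c.edge_mem_edges _) (h ▸ c'.edge_mem_edges _)

lemma ncard_setOf_mem_edgeSet_lift_of_notMem (hD : IsCompatibleCycleDecomposition G M D)
    {e : Sym2 V} (he : e ∈ G.edgeSet \ M.edgeSet) :
    {c | c ∈ D ∧ e ∈ c.lift.edgeSet}.ncard = 1 := by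
  obtain ⟨c₀, hc₀, he₀⟩ := hD.1 e he
  refine Set.ncard_eq_one.mpr ⟨c₀, Set.ext fun c => ⟨fun ⟨hc, hec⟩ => ?_, ?_⟩⟩
  · exact hD.eq_of_mem_edges hc hc₀
      ((ContractedCycle.mem_edgeSet_lift_of_notMem he.2).mp hec) he₀
  · rintro rfl
    exact ⟨hc₀, (ContractedCycle.mem_edgeSet_lift_of_notMem he.2).mpr he₀⟩

lemma ncard_setOf_uses (hG : IsCubic G) (hMG : M ≤ G)
    (hD : IsCompatibleCycleDecomposition G M D) {x : V} (hx : M.IsLeaf x) :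
    {c | c ∈ D ∧ c.Uses x}.ncard = 2 := by
  have h2 : ((G \ M).neighborSet x).ncard = 2 := by rw [hG.ncard_neighborSet_sdiff hMG, hx]
  obtain ⟨a, b, hab, hxab⟩ := Set.ncard_eq_two.mp h2
  have hedge : ∀ w, s(x, w) ∈ G.edgeSet \ M.edgeSet ↔ w = a ∨ w = b := fun w =>
    Set.ext_iff.mp hxab w
  obtain ⟨ca, hca, hxa⟩ := hD.1 _ ((hedge a).mpr (Or.inl rfl))
  obtain ⟨cb, hcb, hxb⟩ := hD.1 _ ((hedge b).mpr (Or.inr rfl))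
  have hne : ca ≠ cb := by
    rintro rfl
    exact hD.2.2 ca hca _ hxa _ hxb (fun h => hab (Sym2.congr_right.mp h))
      ⟨x, Sym2.mem_mk_left x a, Sym2.mem_mk_left x b⟩
  have hset : {c | c ∈ D ∧ c.Uses x} = {ca, cb} := by
    ext c
    refine ⟨fun ⟨hc, e, he, hxe⟩ => ?_, ?_⟩
    · rw [← Sym2.other_spec hxe] at he
      rcases (hedge _).mp (c.edges_subset he) with h | h <;> rw [h] at he
      · exact Or.inl (hD.eq_of_mem_edges hc hca he hxa)
      · exact Or.inr (hD.eq_of_mem_edges hc hcb he hxb)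
    · rintro (rfl | rfl)
      · exact ⟨hca, _, hxa, Sym2.mem_mk_left x a⟩
      · exact ⟨hcb, _, hxb, Sym2.mem_mk_left x b⟩
  rw [hset, Set.ncard_pair hne]

lemma ncard_setOf_mem_edgeSet_lift_of_mem (hG : IsCubic G) (hMG : M ≤ G)
    (hM : ∀ ⦃x y⦄, M.Adj x y → M.IsLeaf x ∨ M.IsLeaf y)
    (hleaf : ∀ e ∈ G.edgeSet \ M.edgeSet, ∀ v ∈ e, M.IsLeaf v)
    (hD : IsCompatibleCycleDecomposition G M D) {e : Sym2 V} (he : e ∈ M.edgeSet) :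
    {c | c ∈ D ∧ e ∈ c.lift.edgeSet}.ncard = 2 := by
  induction e using Sym2.ind with
  | _ x y =>
    wlog hx : M.IsLeaf x generalizing x y
    · rw [Sym2.eq_swap]
      exact this y x (M.mem_edgeSet.mpr (M.mem_edgeSet.mp he).symm) ((hM he).resolve_left hx)
    have hset : {c | c ∈ D ∧ s(x, y) ∈ c.lift.edgeSet} = {c | c ∈ D ∧ c.Uses x} :=
      Set.ext fun c => and_congr_right fun hc =>
        ContractedCycle.mem_edgeSet_lift_iff_uses hleaf (hD.2.2 c hc) he hx
    rw [hset, hD.ncard_setOf_uses hG hMG hx]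

end IsCompatibleCycleDecomposition

lemma Set.Finite.exists_fin_enumeration {α : Type*} {s : Set α} (hs : s.Finite) :
    ∃ (n : ℕ) (φ : Fin n → α), (∀ i, φ i ∈ s) ∧
      ∀ P : α → Prop, {i | P (φ i)}.ncard = {a | a ∈ s ∧ P a}.ncard := by
  obtain ⟨n, φ, hφ⟩ := hs.fin_embedding
  have hφs : ∀ i, φ i ∈ s := fun i => hφ ▸ Set.mem_range_self i
  refine ⟨n, φ, hφs, fun P => ?_⟩
  rw [← Set.ncard_preimage_of_injective_subset_range φ.injective (hφ ▸ fun a ha => ha.1)]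
  exact congrArg Set.ncard (Set.ext fun i => ⟨fun h => ⟨hφs i, h⟩, And.right⟩)

lemma ncard_setOf_snoc {α : Type*} {n : ℕ} (F : Fin n → α) (a : α) (P : α → Prop) :
    {i : Fin (n + 1) | P (Fin.snoc (α := fun _ => α) F a i)}.ncard =
      {i | P (F i)}.ncard + if P a then 1 else 0 := by
  simp only [Set.ncard_eq_toFinset_card', Set.toFinset_ofPred, Finset.card_filter,
    Fin.sum_univ_castSucc, Fin.snoc_castSucc, Fin.snoc_last]

lemma isCycleDoubleCover_snoc {V : Type*} {G C : SimpleGraph V} {n : ℕ}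
    {F : Fin n → SimpleGraph V} (hC : IsCycleSubgraph G C) (hF : ∀ i, IsCycleSubgraph G (F i))
    (hF2 : ∀ e ∈ (G \ C).edgeSet, {i | e ∈ (F i).edgeSet}.ncard = 2)
    (hF1 : ∀ e ∈ C.edgeSet, {i | e ∈ (F i).edgeSet}.ncard = 1) :
    IsCycleDoubleCover G (Fin.snoc F C) := by
  refine ⟨fun i => ?_, fun e he => ?_⟩
  · induction i using Fin.lastCases with
    | last => rwa [Fin.snoc_last]
    | cast i => rw [Fin.snoc_castSucc]; exact hF i
  · rw [ncard_setOf_snoc F C (fun H => e ∈ H.edgeSet)]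
    by_cases heC : e ∈ C.edgeSet
    · rw [hF1 e heC, if_pos heC]
    · rw [hF2 e (by rw [edgeSet_sdiff]; exact ⟨he, heC⟩), if_neg heC]

/-- Let `C` be a dominating cycle of a cubic graph `G` and
`M = G \ E(C)` the associated perfect pseudo-matching. If `G/M` has a cycle decomposition
compatible with the transition system corresponding to `C`, then lifting it yields a family
`S₃` of cycles of `G` covering every edge of `M` twice and every edge of `C` once, so that
`S₃ ∪ {C}` is a cycle double cover of `G` containing `C`. -/
theorem cdc_containing_dominating_cycle
    {V : Type*} [Fintype V] (G C : SimpleGraph V)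
    (hG : IsCubic G) (hC : IsDominatingCycle G C)
    (D : Set (ContractedCycle G (G \ C)))
    (hD : IsCompatibleCycleDecomposition G (G \ C) D) :
    ∃ (n : ℕ) (F : Fin n → SimpleGraph V),
      (∀ i, IsCycleSubgraph G (F i)) ∧
      (∀ e ∈ (G \ C).edgeSet, {i : Fin n | e ∈ (F i).edgeSet}.ncard = 2) ∧
      (∀ e ∈ C.edgeSet, {i : Fin n | e ∈ (F i).edgeSet}.ncard = 1) ∧
      IsCycleDoubleCover G (Fin.snoc F C) := by
  have hM := hC.isLeaf_or_isLeaf_of_adj_sdiff hG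
  have hleaf := hC.1.isLeaf_sdiff_of_mem hG
  obtain ⟨n, φ, hφD, hcount⟩ := hD.finite.exists_fin_enumeration
  have hF : ∀ i, IsCycleSubgraph G (φ i).lift := fun i =>
    ContractedCycle.isCycleSubgraph_lift hM hleaf (hD.2.2 _ (hφD i)) sdiff_le
  have hF2 : ∀ e ∈ (G \ C).edgeSet, {i | e ∈ (φ i).lift.edgeSet}.ncard = 2 := fun e he => by
    rw [hcount (fun c => e ∈ c.lift.edgeSet)]
    exact hD.ncard_setOf_mem_edgeSet_lift_of_mem hG sdiff_le hM hleaf he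
  have hF1 : ∀ e ∈ C.edgeSet, {i | e ∈ (φ i).lift.edgeSet}.ncard = 1 := fun e he => by
    rw [hcount (fun c => e ∈ c.lift.edgeSet)]
    exact hD.ncard_setOf_mem_edgeSet_lift_of_notMem (by rwa [edgeSet_sdiff_sdiff_of_le hC.1.1])
  exact ⟨n, fun i => (φ i).lift, hF, hF2, hF1, isCycleDoubleCover_snoc hC.1 hF hF2 hF1⟩
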